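/- For every real number x with 0 < x ≤ 1/4, the series ∑_{n=1}^∞ catalan(n−1)·xⁿ converges and ∑_{n=1}^∞ catalan(n−1)·xⁿ = (1 − √(1 − 4x))/2. -/

import Mathlib

/-!
Write `a n = catalan n * x ^ (n + 1)`. Catalan's recurrence says that `a (m + 1)` is the
`m`-th coefficient of the Cauchy square of `a`, so the partial sums satisfy
`S (N + 1) ≤ x + S N ^ 2`; for `x ≤ 1/4` this keeps them below `1/2`, which gives convergence.
The sum `S` then solves `S = x + S ^ 2`, and `S ≤ 1/2` selects the root `(1 - √(1 - 4x)) / 2`.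
-/

open Finset

lemma sum_range_sum_antidiagonal_le_sq {R : Type*} [CommSemiring R] [PartialOrder R]
    [IsOrderedRing R] {a : ℕ → R} (ha : ∀ n, 0 ≤ a n) (N : ℕ) :
    ∑ m ∈ range N, ∑ p ∈ antidiagonal m, a p.1 * a p.2 ≤ (∑ n ∈ range N, a n) ^ 2 :=
  calc ∑ m ∈ range N, ∑ p ∈ antidiagonal m, a p.1 * a p.2
      = ∑ m ∈ range N, ∑ k ∈ range (m + 1), a k * a (m - k) := by
        simp only [Nat.sum_antidiagonal_eq_sum_range_succ_mk]
    _ = ∑ i ∈ range N, ∑ j ∈ range (N - i), a i * a j :=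
        sum_range_diag_flip N fun i j => a i * a j
    _ ≤ ∑ i ∈ range N, ∑ j ∈ range N, a i * a j :=
        sum_le_sum fun i _ => sum_le_sum_of_subset_of_nonneg (range_mono (N.sub_le i))
          fun j _ _ => mul_nonneg (ha i) (ha j)
    _ = (∑ n ∈ range N, a n) ^ 2 := by rw [sq, sum_mul_sum]

lemma tsum_eq_add_sq_of_succ_eq_sum_antidiagonal {R : Type*} [NormedRing R] [CompleteSpace R]
    {a : ℕ → R} (hrec : ∀ m, a (m + 1) = ∑ p ∈ antidiagonal m, a p.1 * a p.2)
    (ha : Summable fun n => ‖a n‖) :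
    ∑' n, a n = a 0 + (∑' n, a n) ^ 2 := by
  rw [sq, tsum_mul_tsum_eq_tsum_sum_antidiagonal_of_summable_norm ha ha,
    ha.of_norm.tsum_eq_zero_add]
  simp only [← hrec]

section QuadraticRecurrence

variable {a : ℕ → ℝ} (ha : ∀ n, 0 ≤ a n)
  (hrec : ∀ m, a (m + 1) = ∑ p ∈ antidiagonal m, a p.1 * a p.2)
include ha hrec

lemma sum_range_succ_le_add_sq_of_succ_eq_sum_antidiagonal (N : ℕ) :
    ∑ n ∈ range (N + 1), a n ≤ a 0 + (∑ n ∈ range N, a n) ^ 2 := by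
  rw [sum_range_succ', add_comm]
  simp only [hrec]
  exact add_le_add_right (sum_range_sum_antidiagonal_le_sq ha N) _

variable (h0 : a 0 ≤ 1 / 4)
include h0

lemma sum_range_le_half_of_succ_eq_sum_antidiagonal (N : ℕ) :
    ∑ n ∈ range N, a n ≤ 1 / 2 := by
  induction N with
  | zero => norm_num
  | succ N ih =>
    have hS : 0 ≤ ∑ n ∈ range N, a n := sum_nonneg fun n _ => ha n
    calc ∑ n ∈ range (N + 1), a n ≤ a 0 + (∑ n ∈ range N, a n) ^ 2 :=
          sum_range_succ_le_add_sq_of_succ_eq_sum_antidiagonal ha hrec N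
      _ ≤ 1 / 4 + (1 / 2) ^ 2 := by gcongr
      _ = 1 / 2 := by norm_num

theorem hasSum_of_succ_eq_sum_antidiagonal :
    HasSum a ((1 - √(1 - 4 * a 0)) / 2) := by
  have hpartial := sum_range_le_half_of_succ_eq_sum_antidiagonal ha hrec h0
  have hsum : Summable a := summable_of_sum_range_le ha hpartial
  set S := ∑' n, a n
  have hS_le : S ≤ 1 / 2 := Real.tsum_le_of_sum_range_le ha hpartial
  have hquad : S = a 0 + S ^ 2 := tsum_eq_add_sq_of_succ_eq_sum_antidiagonal hrec
    (hsum.congr fun n => (Real.norm_of_nonneg (ha n)).symm)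
  have hsqrt : √(1 - 4 * a 0) = 1 - 2 * S := by
    rw [show 1 - 4 * a 0 = (1 - 2 * S) ^ 2 by linear_combination 4 * hquad,
      Real.sqrt_sq (by linarith)]
  rw [hsqrt, show (1 - (1 - 2 * S)) / 2 = S by ring]
  exact hsum.hasSum

end QuadraticRecurrence

/-- For every real `x` with `0 < x ≤ 1/4`, the series
`∑_{n≥1} catalan(n−1)·xⁿ` (indexed below by `n` with the term `catalan(n)·x^{n+1}`)
converges to `(1 − √(1 − 4x))/2`. -/
theorem ordered_trees_generating_function_value
    (x : ℝ) (hx : 0 < x) (hx' : x ≤ 1 / 4) :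
    HasSum (fun n : ℕ => (catalan n : ℝ) * x ^ (n + 1))
      ((1 - Real.sqrt (1 - 4 * x)) / 2) := by
  have hrec : ∀ m, (catalan (m + 1) : ℝ) * x ^ (m + 1 + 1) =
      ∑ p ∈ antidiagonal m, (catalan p.1 * x ^ (p.1 + 1)) * (catalan p.2 * x ^ (p.2 + 1)) := by
    intro m
    rw [catalan_succ', Nat.cast_sum, sum_mul]
    refine sum_congr rfl fun p hp => ?_
    rw [HasAntidiagonal.mem_antidiagonal] at hp
    subst hp
    push_cast
    ring
  simpa using hasSum_of_succ_eq_sum_antidiagonal (a := fun n => (catalan n : ℝ) * x ^ (n + 1))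
    (fun n => by positivity) hrec (by simpa using hx')
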